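/- Let (L, ∘_λ, [·_λ ·]) be a transposed Poisson conformal superalgebra. Then for all homogeneous h, x, y, z ∈ L the following identity holds: (−1)^{|x||z|} [(h ∘_λ [x_γ y])_{λ+μ} z] + (−1)^{|x||y|} [(h ∘_λ [y_{μ−γ} z])_{−∂−γ} x] + (−1)^{|y||z|} [(h ∘_λ [z_{−∂−γ} x])_{−∂−μ+γ} y] = 0. -/

import Mathlib

open Polynomial
open scoped TensorProduct

noncomputable section

namespace TPCSAFormal

/-- The super-sign `(-1)^{i·j}` for parities `i, j ∈ ℤ/2ℤ`. -/
def sgn (i j : ZMod 2) : ℂ := (-1 : ℂ) ^ (i.val * j.val)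

variable (L : Type*) [AddCommGroup L] [Module ℂ L]
  [Module (Polynomial ℂ) L] [IsScalarTower ℂ (Polynomial ℂ) L]

/-- A conformal `λ`-product on the `ℂ[∂]`-module `L`, recorded by its family of `n`-th
product coefficients: `a ∘_λ b = ∑_n λ^n • coeff n a b`, with finitely many nonzero terms.
This is exactly the data of a `ℂ`-bilinear map `L ⊗ L → ℂ[λ] ⊗ L`. -/
structure ConformalProduct where
  coeff : ℕ → L →ₗ[ℂ] L →ₗ[ℂ] L
  coeff_finite : ∀ a b : L, ∃ N : ℕ, ∀ n : ℕ, N ≤ n → coeff n a b = 0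

variable {L}

/-- The value `a ∘_λ b` of the `λ`-product at `λ ∈ ℂ`.  Since `ℂ` is infinite, identities
between such values for all `λ` are equivalent to the corresponding polynomial identities. -/
def ConformalProduct.mul (m : ConformalProduct L) (lam : ℂ) (a b : L) : L :=
  ∑ᶠ n : ℕ, lam ^ n • m.coeff n a b

/-- The value `a ∘_{-∂-λ} b`, where `∂` acts on `L` as scalar multiplication by
`X ∈ ℂ[∂]` (the variable `λ` being replaced by the operator `-∂-λ`). -/
def ConformalProduct.cmul (m : ConformalProduct L) (lam : ℂ) (a b : L) : L :=
  ∑ᶠ n : ℕ, ((-((X : Polynomial ℂ) + C lam)) ^ n) • m.coeff n a b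

variable (L) in
/-- A `ℤ₂`-grading on `L` making it a `ℤ₂`-graded `ℂ[∂]`-module: `L = L₀ ⊕ L₁` with
`∂ L_i ⊆ L_i`, where `∂` acts as multiplication by `X ∈ ℂ[∂]`. -/
structure SuperModule where
  grade : ZMod 2 → Submodule ℂ L
  isInternal : DirectSum.IsInternal grade
  X_smul_mem : ∀ (i : ZMod 2) (a : L), a ∈ grade i → (X : Polynomial ℂ) • a ∈ grade i

/-- `m` is an even `λ`-product on the `ℤ₂`-graded `ℂ[∂]`-module `(L, S)`:
it is even with respect to the grading and conformally sesquilinear. -/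
structure IsLambdaProduct (S : SuperModule L) (m : ConformalProduct L) : Prop where
  even : ∀ (i j : ZMod 2) (a b : L), a ∈ S.grade i → b ∈ S.grade j →
    ∀ n : ℕ, m.coeff n a b ∈ S.grade (i + j)
  sesq_left : ∀ (lam : ℂ) (a b : L),
    m.mul lam ((X : Polynomial ℂ) • a) b = (-lam) • m.mul lam a b
  sesq_right : ∀ (lam : ℂ) (a b : L),
    m.mul lam a ((X : Polynomial ℂ) • b) =
      (X : Polynomial ℂ) • m.mul lam a b + lam • m.mul lam a b

/-- `(L, S, m)` is a commutative associative conformal superalgebra. -/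
structure IsCommAssoc (S : SuperModule L) (m : ConformalProduct L)
    extends IsLambdaProduct S m : Prop where
  comm : ∀ (i j : ZMod 2) (a b : L), a ∈ S.grade i → b ∈ S.grade j →
    ∀ lam : ℂ, m.mul lam a b = sgn i j • m.cmul lam b a
  assoc : ∀ (lam mu : ℂ) (a b c : L),
    m.mul lam a (m.mul mu b c) = m.mul (lam + mu) (m.mul lam a b) c

/-- `(L, S, br)` is a Lie conformal superalgebra. -/
structure IsLie (S : SuperModule L) (br : ConformalProduct L)
    extends IsLambdaProduct S br : Prop where
  skew : ∀ (i j : ZMod 2) (a b : L), a ∈ S.grade i → b ∈ S.grade j →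
    ∀ lam : ℂ, br.mul lam a b = -(sgn i j • br.cmul lam b a)
  jacobi : ∀ (i j : ZMod 2) (a b : L), a ∈ S.grade i → b ∈ S.grade j →
    ∀ (c : L) (lam mu : ℂ),
      br.mul lam a (br.mul mu b c) =
        br.mul (lam + mu) (br.mul lam a b) c + sgn i j • br.mul mu b (br.mul lam a c)

/-- `(L, S, m, br)` is a transposed Poisson conformal superalgebra. -/
structure IsTPCSA (S : SuperModule L) (m br : ConformalProduct L) : Prop where
  commAssoc : IsCommAssoc S m
  lie : IsLie S br
  transposedLeibniz : ∀ (i j : ZMod 2) (a b : L), a ∈ S.grade i → b ∈ S.grade j →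
    ∀ (c : L) (lam mu : ℂ),
      (2 : ℂ) • m.mul lam a (br.mul mu b c) =
        br.mul (lam + mu) (m.mul lam a b) c + sgn i j • br.mul mu b (m.mul lam a c)

/-- `(L, S, m, br)` is a Poisson conformal superalgebra. -/
structure IsPCSA (S : SuperModule L) (m br : ConformalProduct L) : Prop where
  commAssoc : IsCommAssoc S m
  lie : IsLie S br
  leibniz : ∀ (i j : ZMod 2) (a b : L), a ∈ S.grade i → b ∈ S.grade j →
    ∀ (c : L) (lam mu : ℂ),
      br.mul lam a (m.mul mu b c) =
        m.mul (lam + mu) (br.mul lam a b) c + sgn i j • m.mul mu b (br.mul lam a c)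

/-- `(L, S, br, α)` is a Hom-Lie conformal superalgebra. -/
structure IsHomLie (S : SuperModule L) (br : ConformalProduct L) (α : L → L)
    extends IsLambdaProduct S br : Prop where
  map_smul_add : ∀ (c : ℂ) (a b : L), α (c • a + b) = c • α a + α b
  map_grade : ∀ (i : ZMod 2) (a : L), a ∈ S.grade i → α a ∈ S.grade i
  commute_partial : ∀ a : L, α ((X : Polynomial ℂ) • a) = (X : Polynomial ℂ) • α a
  skew : ∀ (i j : ZMod 2) (a b : L), a ∈ S.grade i → b ∈ S.grade j →
    ∀ lam : ℂ, br.mul lam a b = -(sgn i j • br.cmul lam b a)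
  homJacobi : ∀ (i j : ZMod 2) (a b : L), a ∈ S.grade i → b ∈ S.grade j →
    ∀ (c : L) (lam mu : ℂ),
      br.mul lam (α a) (br.mul mu b c) =
        br.mul (lam + mu) (br.mul lam a b) (α c) + sgn i j • br.mul mu (α b) (br.mul lam a c)

/-- `(L, S, p)` is a left-symmetric conformal superalgebra. -/
structure IsLeftSymmetric (S : SuperModule L) (p : ConformalProduct L)
    extends IsLambdaProduct S p : Prop where
  leftSym : ∀ (i j : ZMod 2) (a b : L), a ∈ S.grade i → b ∈ S.grade j →
    ∀ (c : L) (lam mu : ℂ),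
      p.mul (lam + mu) (p.mul lam a b) c - p.mul lam a (p.mul mu b c) =
        sgn i j • (p.mul (lam + mu) (p.mul mu b a) c - p.mul mu b (p.mul lam a c))

/-- `(L, S, p)` is a (left) Novikov conformal superalgebra. -/
structure IsNovikov (S : SuperModule L) (p : ConformalProduct L)
    extends IsLeftSymmetric S p : Prop where
  novikov : ∀ (j k : ZMod 2) (b c : L), b ∈ S.grade j → c ∈ S.grade k →
    ∀ (a : L) (lam mu : ℂ),
      p.mul (lam + mu) (p.mul lam a b) c = sgn j k • p.cmul mu (p.mul lam a c) b

/-- `(L, S, mc, p)` is a Novikov-Poisson conformal superalgebra. -/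
structure IsNovikovPoisson (S : SuperModule L) (mc p : ConformalProduct L) : Prop where
  commAssoc : IsCommAssoc S mc
  novikov : IsNovikov S p
  compat₁ : ∀ (lam mu : ℂ) (a b c : L),
    p.mul (lam + mu) (mc.mul lam a b) c = mc.mul lam a (p.mul mu b c)
  compat₂ : ∀ (i j : ZMod 2) (a b : L), a ∈ S.grade i → b ∈ S.grade j →
    ∀ (c : L) (lam mu : ℂ),
      mc.mul (lam + mu) (p.mul lam a b) c - p.mul lam a (mc.mul mu b c) =
        sgn i j • (mc.mul (lam + mu) (p.mul mu b a) c - p.mul mu b (mc.mul lam a c))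

/-- `(L, S, mc, p)` is a pre-Lie commutative conformal superalgebra. -/
structure IsPreLieComm (S : SuperModule L) (mc p : ConformalProduct L) : Prop where
  commAssoc : IsCommAssoc S mc
  leftSymmetric : IsLeftSymmetric S p
  compat : ∀ (i j : ZMod 2) (a b : L), a ∈ S.grade i → b ∈ S.grade j →
    ∀ (c : L) (lam mu : ℂ),
      p.mul lam a (mc.mul mu b c) =
        mc.mul (lam + mu) (p.mul lam a b) c + sgn i j • mc.mul mu b (p.mul lam a c)

/-- `(L, S, mc, p)` is a pre-Lie Poisson conformal superalgebra. -/
structure IsPreLiePoisson (S : SuperModule L) (mc p : ConformalProduct L) : Prop where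
  commAssoc : IsCommAssoc S mc
  leftSymmetric : IsLeftSymmetric S p
  compat₁ : ∀ (lam mu : ℂ) (a b c : L),
    p.mul (lam + mu) (mc.mul lam a b) c = mc.mul lam a (p.mul mu b c)
  compat₂ : ∀ (i j : ZMod 2) (a b : L), a ∈ S.grade i → b ∈ S.grade j →
    ∀ (c : L) (lam mu : ℂ),
      mc.mul (lam + mu) (p.mul lam a b) c - p.mul lam a (mc.mul mu b c) =
        sgn i j • (mc.mul (lam + mu) (p.mul mu b a) c - p.mul mu b (mc.mul lam a c))


/-! Skew-symmetry turns the three terms into `[(h ∘ [x y]) z] ∓ [x (h ∘ [y z])] ± [y (h ∘ [x z])]`.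
Apply `h ∘_λ` to the Jacobi identity for `x, y, z` and expand each of its terms `2 h ∘ [a b]` by
the transposed Leibniz rule. Of the terms produced, `[(h ∘ x) [y z]]` is expanded once more, by the
Jacobi identities for `(h ∘ x, y, z)`, `(x, h ∘ y, z)`, `(x, y, h ∘ z)` and the transposed Leibniz
rule; after that everything but the cyclic sum cancels. -/

lemma sgn_comm (a b : ZMod 2) : sgn a b = sgn b a := by
  rw [sgn, sgn, mul_comm]

lemma sgn_add_left (a b c : ZMod 2) : sgn (a + b) c = sgn a c * sgn b c := by
  rw [sgn, sgn, sgn, ← pow_add, neg_one_pow_eq_pow_mod_two, ZMod.val_add, Nat.mod_mul_mod,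
    ← neg_one_pow_eq_pow_mod_two, add_mul]

lemma sgn_add_right (a b c : ZMod 2) : sgn a (b + c) = sgn a b * sgn a c := by
  rw [sgn_comm, sgn_add_left, sgn_comm b, sgn_comm c]

lemma sgn_mul_self (a b : ZMod 2) : sgn a b * sgn a b = 1 := by
  rw [sgn, ← pow_add, ← two_mul, pow_mul]
  norm_num

namespace ConformalProduct

section
omit [Module (Polynomial ℂ) L] [IsScalarTower ℂ (Polynomial ℂ) L]

variable (m : ConformalProduct L)

lemma support_smul_coeff_finite {R : Type*} [Semiring R] [Module R L] (c : ℕ → R) (a b : L) :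
    (Function.support fun n => c n • m.coeff n a b).Finite := by
  obtain ⟨N, hN⟩ := m.coeff_finite a b
  refine (Set.finite_Iio N).subset fun n hn =>
    Set.mem_Iio.mpr <| not_le.mp fun hNn => hn ?_
  simp only [hN n hNn, smul_zero]

lemma mul_add_left (lam : ℂ) (a b c : L) :
    m.mul lam (a + b) c = m.mul lam a c + m.mul lam b c := by
  rw [mul, mul, mul, ← finsum_add_distrib (m.support_smul_coeff_finite _ a c)
    (m.support_smul_coeff_finite _ b c)]
  simp only [map_add, LinearMap.add_apply, smul_add]

lemma mul_add_right (lam : ℂ) (a b c : L) :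
    m.mul lam a (b + c) = m.mul lam a b + m.mul lam a c := by
  rw [mul, mul, mul, ← finsum_add_distrib (m.support_smul_coeff_finite _ a b)
    (m.support_smul_coeff_finite _ a c)]
  simp only [map_add, smul_add]

lemma mul_smul_left (lam c : ℂ) (a b : L) : m.mul lam (c • a) b = c • m.mul lam a b := by
  rw [mul, mul, smul_finsum' c (m.support_smul_coeff_finite _ a b)]
  simp only [map_smul, LinearMap.smul_apply, smul_comm c]

lemma mul_smul_right (lam c : ℂ) (a b : L) : m.mul lam a (c • b) = c • m.mul lam a b := by
  rw [mul, mul, smul_finsum' c (m.support_smul_coeff_finite _ a b)]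
  simp only [map_smul, smul_comm c]

def mulₗ (lam : ℂ) : L →ₗ[ℂ] L →ₗ[ℂ] L :=
  LinearMap.mk₂ ℂ (m.mul lam) (m.mul_add_left lam) (m.mul_smul_left lam) (m.mul_add_right lam)
    (m.mul_smul_right lam)

lemma mul_sub_left (lam : ℂ) (a b c : L) :
    m.mul lam (a - b) c = m.mul lam a c - m.mul lam b c :=
  LinearMap.map_sub₂ (m.mulₗ lam) a b c

lemma mul_sub_right (lam : ℂ) (a b c : L) :
    m.mul lam a (b - c) = m.mul lam a b - m.mul lam a c :=
  (m.mulₗ lam a).map_sub b c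

lemma mul_neg_right (lam : ℂ) (a b : L) : m.mul lam a (-b) = -m.mul lam a b :=
  (m.mulₗ lam a).map_neg b

end

lemma cmul_smul_left (m : ConformalProduct L) (lam c : ℂ) (a b : L) :
    m.cmul lam (c • a) b = c • m.cmul lam a b := by
  rw [cmul, cmul, smul_finsum' c (m.support_smul_coeff_finite _ a b)]
  simp only [map_smul, LinearMap.smul_apply, smul_comm c]

end ConformalProduct

section
omit [IsScalarTower ℂ (Polynomial ℂ) L]

variable {S : SuperModule L} {m br : ConformalProduct L}

lemma IsLambdaProduct.mul_mem (hm : IsLambdaProduct S m) {i j : ZMod 2} {a b : L}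
    (ha : a ∈ S.grade i) (hb : b ∈ S.grade j) (lam : ℂ) : m.mul lam a b ∈ S.grade (i + j) :=
  finsum_induction (· ∈ S.grade _) (zero_mem _) (fun _ _ => add_mem)
    fun n => (S.grade _).smul_mem _ (hm.even i j a b ha hb n)

lemma IsLie.cmul_eq (hL : IsLie S br) {i j : ZMod 2} {a b : L} (ha : a ∈ S.grade i)
    (hb : b ∈ S.grade j) (lam : ℂ) :
    br.cmul lam b a = -(sgn i j • br.mul lam a b) := by
  rw [hL.skew i j a b ha hb, smul_neg, smul_smul, sgn_mul_self, one_smul, neg_neg]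

lemma IsTPCSA.br_mul_left (hT : IsTPCSA S m br) {i j : ZMod 2} {a b : L} (ha : a ∈ S.grade i)
    (hb : b ∈ S.grade j) (c : L) (lam mu : ℂ) :
    br.mul (lam + mu) (m.mul lam a b) c =
      (2 : ℂ) • m.mul lam a (br.mul mu b c) - sgn i j • br.mul mu b (m.mul lam a c) := by
  rw [hT.transposedLeibniz i j a b ha hb c lam mu, add_sub_cancel_right]

lemma IsTPCSA.br_mul_br (hT : IsTPCSA S m br) {l i j : ZMod 2} {h x y : L}
    (hh : h ∈ S.grade l) (hx : x ∈ S.grade i) (hy : y ∈ S.grade j) (z : L) (lam mu gam : ℂ) :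
    br.mul (lam + gam) (m.mul lam h x) (br.mul (mu - gam) y z) =
      (2 : ℂ) • br.mul (lam + mu) (m.mul lam h (br.mul gam x y)) z
        - (2 * sgn l i) • br.mul gam x (m.mul lam h (br.mul (mu - gam) y z))
        + (2 * (sgn l j * sgn i j)) • br.mul (mu - gam) y (m.mul lam h (br.mul gam x z))
        + (sgn l i * sgn l j) • br.mul mu (br.mul gam x y) (m.mul lam h z)
        + sgn i j • br.mul (lam + (mu - gam)) (m.mul lam h y) (br.mul gam x z) := by
  have jac_hx := hT.lie.jacobi (l + i) j _ y (hT.commAssoc.mul_mem hh hx lam) hy z (lam + gam)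
    (mu - gam)
  have jac_hy := hT.lie.jacobi i (l + j) x _ hx (hT.commAssoc.mul_mem hh hy lam) z gam
    (lam + (mu - gam))
  have jac_hz := hT.lie.jacobi i j x y hx hy (m.mul lam h z) gam (mu - gam)
  have hx_y := congrArg (br.mul (lam + mu) · z) (hT.br_mul_left hh hx y lam gam)
  have hx_z := congrArg (br.mul (mu - gam) y) (hT.br_mul_left hh hx z lam gam)
  have hy_z := congrArg (br.mul gam x) (hT.br_mul_left hh hy z lam (mu - gam))
  simp only [br.mul_sub_left, br.mul_sub_right, br.mul_smul_left, br.mul_smul_right]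
    at hx_y hx_z hy_z
  rw [show lam + gam + (mu - gam) = lam + mu by ring, sgn_add_left] at jac_hx
  rw [show gam + (lam + (mu - gam)) = lam + mu by ring, sgn_add_right, sgn_comm i l] at jac_hy
  rw [show gam + (mu - gam) = mu by ring] at jac_hz
  linear_combination (norm := module) jac_hx + hx_y + (sgn l j * sgn i j) • hx_z
    + sgn l i • jac_hy - sgn l i • hy_z + (sgn l i * sgn l j) • jac_hz
    + (sgn_mul_self l i) • sgn i j • br.mul (lam + (mu - gam)) (m.mul lam h y) (br.mul gam x z)

lemma IsTPCSA.br_mul_br_cyclic (hT : IsTPCSA S m br) {l i j : ZMod 2} {h x y : L}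
    (hh : h ∈ S.grade l) (hx : x ∈ S.grade i) (hy : y ∈ S.grade j) (z : L) (lam mu gam : ℂ) :
    br.mul (lam + mu) (m.mul lam h (br.mul gam x y)) z
      - sgn l i • br.mul gam x (m.mul lam h (br.mul (mu - gam) y z))
      + (sgn l j * sgn i j) • br.mul (mu - gam) y (m.mul lam h (br.mul gam x z)) = 0 := by
  have leib_x := hT.transposedLeibniz l i h x hh hx (br.mul (mu - gam) y z) lam gam
  have leib_y := hT.transposedLeibniz l j h y hh hy (br.mul gam x z) lam (mu - gam)
  have leib_xy := hT.transposedLeibniz l (i + j) h (br.mul gam x y) hh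
    (hT.lie.mul_mem hx hy gam) z lam mu
  rw [sgn_add_right] at leib_xy
  have jac := congrArg (m.mul lam h) (hT.lie.jacobi i j x y hx hy z gam (mu - gam))
  rw [show gam + (mu - gam) = mu by ring, m.mul_add_right, m.mul_smul_right] at jac
  linear_combination (norm := module) -leib_x + sgn i j • leib_y + leib_xy + (2 : ℂ) • jac
    - hT.br_mul_br hh hx hy z lam mu gam

end

/-- the identity (3.16) in a transposed Poisson conformal superalgebra. -/
theorem statement_2 (S : SuperModule L) (m br : ConformalProduct L)
    (hT : IsTPCSA S m br) (l i j k : ZMod 2) (h x y z : L)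
    (hh : h ∈ S.grade l) (hx : x ∈ S.grade i) (hy : y ∈ S.grade j) (hz : z ∈ S.grade k)
    (lam mu gam : ℂ) :
    sgn i k • br.mul (lam + mu) (m.mul lam h (br.mul gam x y)) z
      + sgn i j • br.cmul gam (m.mul lam h (br.mul (mu - gam) y z)) x
      + sgn j k • br.cmul (mu - gam) (m.mul lam h (br.cmul gam z x)) y = 0 := by
  have hq := hT.commAssoc.mul_mem hh (hT.lie.mul_mem hy hz (mu - gam)) lam
  have hr := hT.commAssoc.mul_mem hh (hT.lie.mul_mem hx hz gam) lam
  rw [hT.lie.cmul_eq hx hz, m.mul_neg_right, m.mul_smul_right, ← neg_smul, br.cmul_smul_left,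
    hT.lie.cmul_eq hy hr, hT.lie.cmul_eq hx hq]
  simp only [sgn_add_right, sgn_comm i l, sgn_comm j l, sgn_comm j i]
  linear_combination (norm := module) sgn i k • hT.br_mul_br_cyclic hh hx hy z lam mu gam
    - (sgn_mul_self i j) • (sgn l i * sgn i k) •
        br.mul gam x (m.mul lam h (br.mul (mu - gam) y z))
    + (sgn_mul_self j k) • (sgn l j * sgn i j * sgn i k) •
        br.mul (mu - gam) y (m.mul lam h (br.mul gam x z))
end TPCSAFormal
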